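/- Let f = x₀²y₀ − (x₀+x₁)²y₁ + x₁²y₂ and let J ⊂ k[α₀,α₁,β₀,β₁,β₂] be the ideal generated by Ann(f)₂. Then β₀ is in the saturation of J with respect to the irrelevant maximal ideal; concretely, α₀³β₀, α₁β₀, β₀², β₀β₁, β₀β₂ all lie in J. -/

import Mathlib

open MvPolynomial

noncomputable section

/-- The differential operator with constant coefficients corresponding to a monomial
exponent `m` (composition of partial derivatives). -/
def monOp (k : Type*) [CommSemiring k] {n : ℕ} (m : Fin n →₀ ℕ) :
    Module.End k (MvPolynomial (Fin n) k) :=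
  (List.ofFn fun i : Fin n =>
    ((pderiv i).toLinearMap : Module.End k (MvPolynomial (Fin n) k)) ^ m i).prod

/-- Apolarity contraction: the linear map `θ ↦ θ ⌟ f`, where a dual polynomial `θ`
acts on `f` as a differential operator with constant coefficients. -/
def contractMap {k : Type*} [CommSemiring k] {n : ℕ} (f : MvPolynomial (Fin n) k) :
    MvPolynomial (Fin n) k →ₗ[k] MvPolynomial (Fin n) k :=
  (Finsupp.lsum k fun m => LinearMap.toSpanSingleton k _ ((monOp k m) f)) ∘ₗ
    (AddMonoidAlgebra.coeffLinearEquiv k).toLinearMap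

/-- The irrelevant maximal ideal `(X 0, …, X (n-1))`. -/
def irrel (k : Type*) [CommSemiring k] (n : ℕ) : Ideal (MvPolynomial (Fin n) k) :=
  Ideal.span (Set.range X)

/-- Saturation of an ideal with respect to the irrelevant maximal ideal. -/
def satur {k : Type*} [CommRing k] {n : ℕ} (I : Ideal (MvPolynomial (Fin n) k)) :
    Ideal (MvPolynomial (Fin n) k) :=
  ⨆ m : ℕ, Submodule.colon I ((irrel k n ^ m : Ideal (MvPolynomial (Fin n) k)) : Submodule _ _)

/-- An ideal is saturated (with respect to the irrelevant maximal ideal). -/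
def IsSat {k : Type*} [CommRing k] {n : ℕ} (I : Ideal (MvPolynomial (Fin n) k)) : Prop :=
  Submodule.colon I ((irrel k n : Ideal _) : Submodule _ _) ≤ I

/-- An ideal is homogeneous. -/
def IsHomogIdeal {k : Type*} [CommSemiring k] {n : ℕ}
    (I : Ideal (MvPolynomial (Fin n) k)) : Prop :=
  ∀ g ∈ I, ∀ j : ℕ, homogeneousComponent j g ∈ I

/-- Hilbert function of `S/I` in degree `i`. -/
def HFq (k : Type*) [Field k] {n : ℕ} (I : Ideal (MvPolynomial (Fin n) k)) (i : ℕ) : ℕ :=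
  Module.finrank k (homogeneousSubmodule (Fin n) k i) -
    Module.finrank k (Submodule.restrictScalars k I ⊓ homogeneousSubmodule (Fin n) k i :
      Submodule k (MvPolynomial (Fin n) k))

/-- Hilbert function of the apolar algebra `Sym V⋆ / Ann(f)` in degree `i`. -/
def HFapolar {k : Type*} [Field k] {n : ℕ} (f : MvPolynomial (Fin n) k) (i : ℕ) : ℕ :=
  Module.finrank k (homogeneousSubmodule (Fin n) k i) -
    Module.finrank k (LinearMap.ker (contractMap f) ⊓ homogeneousSubmodule (Fin n) k i :
      Submodule k (MvPolynomial (Fin n) k))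

/-- Zariski closure of a subset of a `k`-vector space: common zeros of all polynomial
functions (elements of the subalgebra of functions generated by linear functionals)
vanishing on the subset. -/
def zcl (k : Type*) {M : Type*} [Field k] [AddCommGroup M] [Module k M] (A : Set M) : Set M :=
  {p | ∀ F : M → k,
    F ∈ Algebra.adjoin k (Set.range fun φ : Module.Dual k M => (φ : M → k)) →
    (∀ a ∈ A, F a = 0) → F p = 0}

end

/-! Each of `α₁β₀, β₀², β₀β₁, β₀β₂, α₀β₂, α₁β₁ − α₀β₁, α₀β₀ + α₀β₁ + α₁β₂` is a quadric
annihilating `f`, hence lies in `J`, and `α₀³β₀` is a combination of the last three and `α₁β₀`.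
So `β₀` times every variable other than `α₀`, and `β₀` times `α₀³`, lie in `J`; then `β₀`
multiplies every monomial of degree `3`, hence all of `irrel³`, into `J`. -/

section Apolarity

variable {k : Type*} [CommSemiring k] {n : ℕ}

theorem contractMap_monomial (f : MvPolynomial (Fin n) k) (m : Fin n →₀ ℕ) (c : k) :
    contractMap f (monomial m c) = c • monOp k m f :=
  Finsupp.lsum_single k _ m c

theorem contractMap_X_mul_X (f : MvPolynomial (Fin n) k) (i j : Fin n) :
    contractMap f (X i * X j) = monOp k (Finsupp.single i 1 + Finsupp.single j 1) f := by
  rw [X, X, monomial_mul, one_mul, contractMap_monomial, one_smul]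

theorem isHomogeneous_X_mul_X {σ : Type*} (i j : σ) :
    (X i * X j : MvPolynomial σ k).IsHomogeneous 2 :=
  (isHomogeneous_X k i).mul (isHomogeneous_X k j)

end Apolarity

section Saturation

variable {R : Type*} [CommRing R]

theorem Ideal.colon_colon (I A B : Ideal R) :
    (I.colon (A : Set R)).colon (B : Set R) = I.colon ((A * B : Ideal R) : Set R) := by
  ext r
  simp only [Submodule.mem_colon, smul_eq_mul, SetLike.mem_coe]
  refine ⟨fun h p hp => ?_, fun h b hb a ha => ?_⟩
  · refine Submodule.mul_induction_on hp (fun a ha b hb => ?_) (fun p q hp hq => ?_)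
    · simpa [mul_comm a, mul_assoc] using h b hb a ha
    · rw [mul_add]; exact add_mem hp hq
  · simpa [mul_comm b, mul_assoc] using h _ (Ideal.mul_mem_mul ha hb)

variable {k : Type*} [CommRing k] {n : ℕ}

theorem mem_colon_irrel_pow {I : Ideal (MvPolynomial (Fin n) k)} (i : Fin n) (m : ℕ)
    {g : MvPolynomial (Fin n) k} (hne : ∀ j ≠ i, g * X j ∈ I) (hi : g * X i ^ m ∈ I) :
    g ∈ I.colon ((irrel k n ^ m : Ideal _) : Set _) := by
  induction m generalizing g with
  | zero => simpa using hi
  | succ m ih =>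
    have hX : ∀ j, g * X j ∈ I.colon ((irrel k n ^ m : Ideal _) : Set _) := by
      intro j
      by_cases hj : j = i
      · subst hj
        refine ih (fun l hl => ?_) (by rwa [mul_assoc, ← pow_succ'])
        rw [mul_right_comm]
        exact I.mul_mem_right _ (hne l hl)
      · exact Ideal.le_colon (hne j hj)
    rw [pow_succ, ← Ideal.colon_colon, irrel, Ideal.colon_span, Submodule.mem_colon]
    rintro _ ⟨j, rfl⟩
    exact hX j

theorem mem_satur_of_mul_X_mem {I : Ideal (MvPolynomial (Fin n) k)} (i : Fin n) (m : ℕ)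
    {g : MvPolynomial (Fin n) k} (hne : ∀ j ≠ i, g * X j ∈ I) (hi : g * X i ^ m ∈ I) :
    g ∈ satur I :=
  Submodule.mem_iSup_of_mem m (mem_colon_irrel_pow i m hne hi)

end Saturation

theorem pow_three_mul_mem_of_mem_quadrics {R : Type*} [CommRing R] {I : Ideal R}
    {a₀ a₁ b₀ b₁ b₂ : R}
    (h₁ : a₁ * b₀ ∈ I) (h₂ : a₀ * b₂ ∈ I) (h₃ : a₁ * b₁ - a₀ * b₁ ∈ I)
    (h₄ : a₀ * b₀ + a₀ * b₁ + a₁ * b₂ ∈ I) : a₀ ^ 3 * b₀ ∈ I := by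
  have key : a₀ ^ 3 * b₀ = (a₀ ^ 2 - a₀ * a₁) * (a₀ * b₀ + a₀ * b₁ + a₁ * b₂)
      - (a₀ * a₁ - a₁ ^ 2) * (a₀ * b₂) + a₀ ^ 2 * (a₁ * b₁ - a₀ * b₁) + a₀ ^ 2 * (a₁ * b₀) := by
    ring
  rw [key]
  exact add_mem (add_mem (sub_mem (I.mul_mem_left _ h₄) (I.mul_mem_left _ h₂))
    (I.mul_mem_left _ h₃)) (I.mul_mem_left _ h₁)

noncomputable def cubic (k : Type*) [CommRing k] : MvPolynomial (Fin 5) k :=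
  X 0 ^ 2 * X 2 - (X 0 + X 1) ^ 2 * X 3 + X 1 ^ 2 * X 4

theorem contractMap_cubic_quadrics_eq_zero (k : Type*) [CommRing k] :
    contractMap (cubic k) (X 1 * X 2) = 0 ∧ contractMap (cubic k) (X 2 * X 2) = 0 ∧
      contractMap (cubic k) (X 2 * X 3) = 0 ∧ contractMap (cubic k) (X 2 * X 4) = 0 ∧
      contractMap (cubic k) (X 0 * X 4) = 0 ∧
      contractMap (cubic k) (X 1 * X 3 - X 0 * X 3) = 0 ∧
      contractMap (cubic k) (X 0 * X 2 + X 0 * X 3 + X 1 * X 4) = 0 := by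
  simp only [map_add, map_sub, contractMap_X_mul_X]
  simp +decide [monOp, List.ofFn_succ, Finsupp.single_apply, pow_succ, cubic]
  ring

theorem stmt3_general (k : Type*) [Field k] :
    let x0 : MvPolynomial (Fin 5) k := X 0
    let x1 : MvPolynomial (Fin 5) k := X 1
    let y0 : MvPolynomial (Fin 5) k := X 2
    let y1 : MvPolynomial (Fin 5) k := X 3
    let y2 : MvPolynomial (Fin 5) k := X 4
    let f := x0 ^ 2 * y0 - (x0 + x1) ^ 2 * y1 + x1 ^ 2 * y2
    let a0 : MvPolynomial (Fin 5) k := X 0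
    let a1 : MvPolynomial (Fin 5) k := X 1
    let b0 : MvPolynomial (Fin 5) k := X 2
    let b1 : MvPolynomial (Fin 5) k := X 3
    let b2 : MvPolynomial (Fin 5) k := X 4
    let J : Ideal (MvPolynomial (Fin 5) k) :=
      Ideal.span ((LinearMap.ker (contractMap f) ⊓ homogeneousSubmodule (Fin 5) k 2 :
        Submodule k (MvPolynomial (Fin 5) k)) : Set (MvPolynomial (Fin 5) k))
    b0 ∈ satur J ∧
      a0 ^ 3 * b0 ∈ J ∧ a1 * b0 ∈ J ∧ b0 ^ 2 ∈ J ∧ b0 * b1 ∈ J ∧ b0 * b2 ∈ J := by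
  intro x0 x1 y0 y1 y2 f a0 a1 b0 b1 b2 J
  have hJ : ∀ g, g.IsHomogeneous 2 → contractMap (cubic k) g = 0 → g ∈ J :=
    fun g hg h => Ideal.subset_span ⟨h, hg⟩
  obtain ⟨h₁₂, h₂₂, h₂₃, h₂₄, h₀₄, h₁₃, h₀₂⟩ := contractMap_cubic_quadrics_eq_zero k
  have hα₁β₀ := hJ _ (isHomogeneous_X_mul_X 1 2) h₁₂
  have hβ₀β₀ := hJ _ (isHomogeneous_X_mul_X 2 2) h₂₂
  have hβ₀β₁ := hJ _ (isHomogeneous_X_mul_X 2 3) h₂₃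
  have hβ₀β₂ := hJ _ (isHomogeneous_X_mul_X 2 4) h₂₄
  have hα₀β₂ := hJ _ (isHomogeneous_X_mul_X 0 4) h₀₄
  have hdiff := hJ _ ((isHomogeneous_X_mul_X 1 3).sub (isHomogeneous_X_mul_X 0 3)) h₁₃
  have hsum := hJ _ (((isHomogeneous_X_mul_X 0 2).add (isHomogeneous_X_mul_X 0 3)).add
    (isHomogeneous_X_mul_X 1 4)) h₀₂
  have hcube : a0 ^ 3 * b0 ∈ J := pow_three_mul_mem_of_mem_quadrics hα₁β₀ hα₀β₂ hdiff hsum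
  refine ⟨mem_satur_of_mul_X_mem 0 3 (fun j hj => ?_) (by rwa [mul_comm]), hcube,
    hα₁β₀, by rwa [sq], hβ₀β₁, hβ₀β₂⟩
  fin_cases j
  · exact absurd rfl hj
  · rwa [mul_comm]
  all_goals assumption

/-- with `J` the ideal generated by the degree 2 part of the apolar ideal of
`f = x₀²y₀ − (x₀+x₁)²y₁ + x₁²y₂`, the element `β₀` lies in the saturation of `J` with
respect to the irrelevant maximal ideal; concretely `α₀³β₀, α₁β₀, β₀², β₀β₁, β₀β₂ ∈ J`.
In the dual ring `k[α₀,α₁,β₀,β₁,β₂]`, `α₀ = X 0`, `α₁ = X 1`, `βᵢ = X (2+i)`. -/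
theorem stmt3 (k : Type*) [Field k] [IsAlgClosed k] [CharZero k] :
    let x0 : MvPolynomial (Fin 5) k := X 0
    let x1 : MvPolynomial (Fin 5) k := X 1
    let y0 : MvPolynomial (Fin 5) k := X 2
    let y1 : MvPolynomial (Fin 5) k := X 3
    let y2 : MvPolynomial (Fin 5) k := X 4
    let f := x0 ^ 2 * y0 - (x0 + x1) ^ 2 * y1 + x1 ^ 2 * y2
    let a0 : MvPolynomial (Fin 5) k := X 0
    let a1 : MvPolynomial (Fin 5) k := X 1
    let b0 : MvPolynomial (Fin 5) k := X 2
    let b1 : MvPolynomial (Fin 5) k := X 3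
    let b2 : MvPolynomial (Fin 5) k := X 4
    let J : Ideal (MvPolynomial (Fin 5) k) :=
      Ideal.span ((LinearMap.ker (contractMap f) ⊓ homogeneousSubmodule (Fin 5) k 2 :
        Submodule k (MvPolynomial (Fin 5) k)) : Set (MvPolynomial (Fin 5) k))
    b0 ∈ satur J ∧
      a0 ^ 3 * b0 ∈ J ∧ a1 * b0 ∈ J ∧ b0 ^ 2 ∈ J ∧ b0 * b1 ∈ J ∧ b0 * b2 ∈ J :=
  stmt3_general k
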